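/- Let H be a quasi-Hopf algebra with bijective antipode S, associator Φ, Drinfel'd twist f = f¹⊗f² with inverse f⁻¹ = g¹⊗g², q_R = q¹⊗q² = X¹ ⊗ S⁻¹(αX³)X², and U := g¹S(q²) ⊗ g²S(q¹) ∈ H⊗H. Then for all h ∈ H: U·(1 ⊗ S(h)) = Δ(S(h₁))·U·(h₂ ⊗ 1). -/

import Mathlib

open TensorProduct

noncomputable section

/-- A quasi-Hopf algebra structure (Drinfel'd) on a `k`-algebra `H`:
an algebra-map coproduct `comul`, an algebra-map counit, an invertible
associator `assoc ∈ H⊗H⊗H`, elements `α, β` and an anti-multiplicative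
antipode, satisfying (2.1)–(2.6) of the paper. -/
structure QuasiHopfAlgebra (k H : Type*) [CommRing k] [Ring H] [Algebra k H] where
  /-- the coproduct, an algebra map `H → H ⊗ H` -/
  comul : H →ₐ[k] H ⊗[k] H
  /-- the counit, an algebra map `H → k` -/
  counit : H →ₐ[k] k
  /-- the associator `Φ` -/
  assoc : H ⊗[k] (H ⊗[k] H)
  /-- the inverse `Φ⁻¹` of the associator -/
  assocInv : H ⊗[k] (H ⊗[k] H)
  /-- the antipode `S` -/
  antipode : H →ₗ[k] H
  /-- the element `α` -/
  alpha : H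
  /-- the element `β` -/
  beta : H
  antipode_one : antipode 1 = 1
  antipode_mul : ∀ a b : H, antipode (a * b) = antipode b * antipode a
  assoc_mul_inv : assoc * assocInv = 1
  inv_mul_assoc : assocInv * assoc = 1
  /-- (2.1): quasi-coassociativity `(id ⊗ Δ)Δ(h) = Φ ((Δ ⊗ id)Δ(h)) Φ⁻¹` -/
  quasi_coassoc : ∀ h : H,
    TensorProduct.map LinearMap.id comul.toLinearMap (comul h)
      = assoc * (TensorProduct.assoc k H H H)
          (TensorProduct.map comul.toLinearMap LinearMap.id (comul h)) * assocInv
  /-- (2.2): left counit axiom -/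
  counit_comul : ∀ h : H,
    (TensorProduct.lid k H) (TensorProduct.map counit.toLinearMap LinearMap.id (comul h)) = h
  /-- (2.2): right counit axiom -/
  comul_counit : ∀ h : H,
    (TensorProduct.rid k H) (TensorProduct.map LinearMap.id counit.toLinearMap (comul h)) = h
  /-- (2.3): the pentagon axiom
  `(1 ⊗ Φ)·((id ⊗ Δ ⊗ id)Φ)·(Φ ⊗ 1) = ((id ⊗ id ⊗ Δ)Φ)·((Δ ⊗ id ⊗ id)Φ)` -/
  pentagon :
    ((1 : H) ⊗ₜ[k] assoc)
      * (TensorProduct.map LinearMap.id (TensorProduct.assoc k H H H).toLinearMap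
          (TensorProduct.map LinearMap.id
            (TensorProduct.map comul.toLinearMap LinearMap.id) assoc))
      * (TensorProduct.map LinearMap.id (TensorProduct.assoc k H H H).toLinearMap
          ((TensorProduct.assoc k H (H ⊗[k] H) H) (assoc ⊗ₜ[k] (1 : H))))
    = (TensorProduct.map LinearMap.id
          (TensorProduct.map LinearMap.id comul.toLinearMap) assoc)
      * ((TensorProduct.assoc k H H (H ⊗[k] H))
          (TensorProduct.map comul.toLinearMap LinearMap.id assoc))
  /-- (2.4): `(id ⊗ ε ⊗ id)(Φ) = 1 ⊗ 1` -/
  counit_assoc :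
    TensorProduct.map LinearMap.id
      ((TensorProduct.lid k H).toLinearMap ∘ₗ
        TensorProduct.map counit.toLinearMap LinearMap.id) assoc = 1
  /-- (2.5): `Σ S(h₁) α h₂ = ε(h) α` -/
  antipode_left : ∀ h : H,
    LinearMap.mul' k H
      (TensorProduct.map (LinearMap.mulRight k alpha ∘ₗ antipode) LinearMap.id (comul h))
      = counit h • alpha
  /-- (2.5): `Σ h₁ β S(h₂) = ε(h) β` -/
  antipode_right : ∀ h : H,
    LinearMap.mul' k H
      (TensorProduct.map LinearMap.id (LinearMap.mulLeft k beta ∘ₗ antipode) (comul h))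
      = counit h • beta
  /-- (2.6): `X¹ β S(X²) α X³ = 1` -/
  assoc_antipode_left :
    LinearMap.mul' k H
      (TensorProduct.map LinearMap.id
        (LinearMap.mul' k H ∘ₗ
          TensorProduct.map
            (LinearMap.mulRight k alpha ∘ₗ LinearMap.mulLeft k beta ∘ₗ antipode)
            LinearMap.id)
        assoc) = 1
  /-- (2.6): `S(x¹) α x² β S(x³) = 1` -/
  assoc_antipode_right :
    LinearMap.mul' k H
      (TensorProduct.map antipode
        (LinearMap.mul' k H ∘ₗ
          TensorProduct.map
            (LinearMap.mulRight k beta ∘ₗ LinearMap.mulLeft k alpha)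
            antipode)
        assocInv) = 1

variable {k H : Type*} [CommRing k] [Ring H] [Algebra k H]

/-- `q_R = X¹ ⊗ S⁻¹(αX³)X²`, built from the associator. -/
def qR (Q : QuasiHopfAlgebra k H) (Sinv : H →ₗ[k] H) : H ⊗[k] H :=
  TensorProduct.map LinearMap.id
    (TensorProduct.lift (LinearMap.mk₂ k (fun x2 x3 => Sinv (Q.alpha * x3) * x2)
      (fun x2 x2' x3 => by simp [mul_add])
      (fun c x2 x3 => by simp [mul_smul_comm])
      (fun x2 x3 x3' => by simp [mul_add, map_add, add_mul])
      (fun c x2 x3 => by simp [mul_smul_comm, map_smul, smul_mul_assoc])))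
    Q.assoc

/-- `U = g¹S(q²) ⊗ g²S(q¹) = f⁻¹ · (S ⊗ S)(swap q_R)`. -/
def Uel (Q : QuasiHopfAlgebra k H) (Sinv : H →ₗ[k] H) (g : H ⊗[k] H) : H ⊗[k] H :=
  g * TensorProduct.map Q.antipode Q.antipode ((TensorProduct.comm k H H) (qR Q Sinv))

/-- The right-hand side `Σ Δ(S(h₁)) · U · (h₂ ⊗ 1)` as a linear map in `h₁ ⊗ h₂`. -/
def rhs12 (Q : QuasiHopfAlgebra k H) (U : H ⊗[k] H) : H ⊗[k] H →ₗ[k] H ⊗[k] H :=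
  TensorProduct.lift (LinearMap.mk₂ k
    (fun h1 h2 => Q.comul (Q.antipode h1) * U * (h2 ⊗ₜ[k] (1 : H)))
    (fun h1 h1' h2 => by simp [map_add, add_mul])
    (fun c h1 h2 => by simp [map_smul, smul_mul_assoc])
    (fun h1 h2 h2' => by simp [TensorProduct.add_tmul, mul_add])
    (fun c h1 h2 => by
      rw [show ((c • h2) ⊗ₜ[k] (1 : H)) = c • (h2 ⊗ₜ[k] (1 : H)) from (TensorProduct.smul_tmul' c h2 1).symm, mul_smul_comm]))

/-
The antipode turns the identity `(1 ⊗ S⁻¹(h₂)) q_R Δ(h₁) = (h ⊗ 1) q_R` into the claim: the map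
`T = (S ⊗ S) ∘ flip` (`antipodeFlip`) is anti-multiplicative, sends `(h ⊗ 1) q_R` to `T(q_R)(1 ⊗ S(h))` and
`(1 ⊗ S⁻¹(h₂)) q_R Δ(h₁)` to `T(Δ(h₁)) T(q_R) (h₂ ⊗ 1)`, and the twist rewrites
`f⁻¹ T(Δ(h₁))` as `Δ(S(h₁)) f⁻¹`.
The identity itself follows by writing its left side as `(id ⊗ G)(Φ · (Δ ⊗ id)Δ(h))` with
`G(x ⊗ y) = S⁻¹(α y) x` (`qRContract`), moving `Φ` to the right by quasi-coassociativity, and using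
`G(Δ(b) · y) = ε(b) G(y)`, which is the antipode axiom `S(b₁) α b₂ = ε(b) α` read through `S⁻¹`.
-/

namespace QuasiHopfAlgebra

variable (Q : QuasiHopfAlgebra k H) (Sinv : H →ₗ[k] H)

lemma inv_antipode_mul (hS1 : ∀ a : H, Sinv (Q.antipode a) = a)
    (hS2 : ∀ a : H, Q.antipode (Sinv a) = a) (x y : H) :
    Sinv (x * y) = Sinv y * Sinv x := by
  simpa only [Q.antipode_mul, hS2] using hS1 (Sinv y * Sinv x)

def antipodeFlip : H ⊗[k] H →ₗ[k] H ⊗[k] H :=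
  TensorProduct.map Q.antipode Q.antipode ∘ₗ (TensorProduct.comm k H H).toLinearMap

@[simp]
lemma antipodeFlip_tmul (a b : H) :
    Q.antipodeFlip (a ⊗ₜ[k] b) = Q.antipode b ⊗ₜ[k] Q.antipode a := rfl

lemma antipodeFlip_mul (u v : H ⊗[k] H) :
    Q.antipodeFlip (u * v) = Q.antipodeFlip v * Q.antipodeFlip u := by
  induction u using TensorProduct.induction_on with
  | zero => simp
  | add x y hx hy => simp only [add_mul, mul_add, map_add, hx, hy]
  | tmul a b =>
    induction v using TensorProduct.induction_on with
    | zero => simp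
    | add x y hx hy => simp only [add_mul, mul_add, map_add, hx, hy]
    | tmul c d => simp [Algebra.TensorProduct.tmul_mul_tmul, Q.antipode_mul]

def qRContract : H ⊗[k] H →ₗ[k] H :=
  TensorProduct.lift (LinearMap.mk₂ k (fun x2 x3 => Sinv (Q.alpha * x3) * x2)
    (fun x2 x2' x3 => by simp [mul_add])
    (fun c x2 x3 => by simp)
    (fun x2 x3 x3' => by simp [mul_add, map_add, add_mul])
    (fun c x2 x3 => by simp [map_smul]))

@[simp]
lemma qRContract_tmul (x y : H) : Q.qRContract Sinv (x ⊗ₜ[k] y) = Sinv (Q.alpha * y) * x := rfl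

lemma qR_eq_map_qRContract :
    qR Q Sinv = TensorProduct.map LinearMap.id (Q.qRContract Sinv) Q.assoc := rfl

lemma qRContract_comul (hS1 : ∀ a : H, Sinv (Q.antipode a) = a)
    (hS2 : ∀ a : H, Q.antipode (Sinv a) = a) (b : H) :
    Q.qRContract Sinv (Q.comul b) = Q.counit b • Sinv Q.alpha := by
  have hG : ∀ c : H ⊗[k] H, Q.qRContract Sinv c = Sinv (LinearMap.mul' k H
      (TensorProduct.map (LinearMap.mulRight k Q.alpha ∘ₗ Q.antipode) LinearMap.id c)) := by
    intro c
    induction c using TensorProduct.induction_on with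
    | zero => simp
    | add x y hx hy => simp only [map_add, hx, hy]
    | tmul u v => simp [Q.inv_antipode_mul Sinv hS1 hS2, hS1, mul_assoc]
  rw [hG, Q.antipode_left b, map_smul]

lemma qRContract_comul_mul (hS1 : ∀ a : H, Sinv (Q.antipode a) = a)
    (hS2 : ∀ a : H, Q.antipode (Sinv a) = a) (b : H) (y : H ⊗[k] H) :
    Q.qRContract Sinv (Q.comul b * y) = Q.counit b • Q.qRContract Sinv y := by
  have hmul : ∀ (c : H ⊗[k] H) (q r : H),
      Q.qRContract Sinv (c * q ⊗ₜ[k] r) = Sinv r * Q.qRContract Sinv c * q := by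
    intro c q r
    induction c using TensorProduct.induction_on with
    | zero => simp
    | add x y hx hy => simp only [add_mul, mul_add, map_add, hx, hy]
    | tmul u v =>
      simp [Algebra.TensorProduct.tmul_mul_tmul, Q.inv_antipode_mul Sinv hS1 hS2, mul_assoc]
  induction y using TensorProduct.induction_on with
  | zero => simp
  | add x y hx hy => simp only [mul_add, map_add, hx, hy, smul_add]
  | tmul q r =>
    rw [hmul, Q.qRContract_comul Sinv hS1 hS2, qRContract_tmul,
      Q.inv_antipode_mul Sinv hS1 hS2]
    simp only [mul_smul_comm, smul_mul_assoc, mul_assoc]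

lemma map_qRContract_tmul_comul_mul (hS1 : ∀ a : H, Sinv (Q.antipode a) = a)
    (hS2 : ∀ a : H, Q.antipode (Sinv a) = a) (a b : H) (φ : H ⊗[k] (H ⊗[k] H)) :
    TensorProduct.map LinearMap.id (Q.qRContract Sinv) ((a ⊗ₜ[k] Q.comul b) * φ)
      = Q.counit b • ((a ⊗ₜ[k] (1 : H)) * TensorProduct.map LinearMap.id (Q.qRContract Sinv) φ) := by
  induction φ using TensorProduct.induction_on with
  | zero => simp
  | add x y hx hy => simp only [mul_add, map_add, hx, hy, smul_add]
  | tmul p w =>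
    simp [Algebra.TensorProduct.tmul_mul_tmul, Q.qRContract_comul_mul Sinv hS1 hS2,
      TensorProduct.tmul_smul]

lemma map_qRContract_mul_tmul (hS1 : ∀ a : H, Sinv (Q.antipode a) = a)
    (hS2 : ∀ a : H, Q.antipode (Sinv a) = a) (φ : H ⊗[k] (H ⊗[k] H)) (c : H ⊗[k] H) (b : H) :
    ((1 : H) ⊗ₜ[k] Sinv b) * TensorProduct.map LinearMap.id (Q.qRContract Sinv) φ * c
      = TensorProduct.map LinearMap.id (Q.qRContract Sinv)
          (φ * TensorProduct.assoc k H H H (c ⊗ₜ[k] b)) := by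
  induction φ using TensorProduct.induction_on with
  | zero => simp
  | add x y hx hy => simp only [add_mul, mul_add, map_add, hx, hy]
  | tmul p w =>
    induction w using TensorProduct.induction_on with
    | zero => simp
    | add x y hx hy => simp only [TensorProduct.tmul_add, map_add, add_mul, mul_add, hx, hy]
    | tmul q r =>
      induction c using TensorProduct.induction_on with
      | zero => simp
      | add x y hx hy => simp only [TensorProduct.add_tmul, map_add, mul_add, hx, hy]
      | tmul u v =>
        simp [Algebra.TensorProduct.tmul_mul_tmul, Q.inv_antipode_mul Sinv hS1 hS2, mul_assoc]

def qRConj : H ⊗[k] H →ₗ[k] H ⊗[k] H :=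
  TensorProduct.lift (LinearMap.mk₂ k
    (fun a b => ((1 : H) ⊗ₜ[k] Sinv b) * qR Q Sinv * Q.comul a)
    (fun a a' b => by simp [map_add, mul_add])
    (fun c a b => by simp [map_smul])
    (fun a b b' => by simp [map_add, TensorProduct.tmul_add, add_mul])
    (fun c a b => by simp [map_smul, TensorProduct.tmul_smul]))

@[simp]
lemma qRConj_tmul (a b : H) :
    Q.qRConj Sinv (a ⊗ₜ[k] b) = ((1 : H) ⊗ₜ[k] Sinv b) * qR Q Sinv * Q.comul a := rfl

lemma qRConj_eq_map_qRContract (hS1 : ∀ a : H, Sinv (Q.antipode a) = a)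
    (hS2 : ∀ a : H, Q.antipode (Sinv a) = a) (x : H ⊗[k] H) :
    Q.qRConj Sinv x = TensorProduct.map LinearMap.id (Q.qRContract Sinv)
      (Q.assoc * TensorProduct.assoc k H H H (TensorProduct.map Q.comul.toLinearMap LinearMap.id x)) := by
  induction x using TensorProduct.induction_on with
  | zero => simp
  | add x y hx hy => simp only [map_add, mul_add, hx, hy]
  | tmul a b =>
    simpa [qR_eq_map_qRContract] using Q.map_qRContract_mul_tmul Sinv hS1 hS2 Q.assoc (Q.comul a) b

lemma map_qRContract_comul_mul_assoc (hS1 : ∀ a : H, Sinv (Q.antipode a) = a)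
    (hS2 : ∀ a : H, Q.antipode (Sinv a) = a) (x : H ⊗[k] H) :
    TensorProduct.map LinearMap.id (Q.qRContract Sinv)
        (TensorProduct.map LinearMap.id Q.comul.toLinearMap x * Q.assoc)
      = (TensorProduct.rid k H (TensorProduct.map LinearMap.id Q.counit.toLinearMap x)
          ⊗ₜ[k] (1 : H)) * qR Q Sinv := by
  induction x using TensorProduct.induction_on with
  | zero => simp
  | add x y hx hy => simp only [map_add, add_mul, TensorProduct.add_tmul, hx, hy]
  | tmul a b =>
    simp only [TensorProduct.map_tmul, LinearMap.id_apply, AlgHom.toLinearMap_apply]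
    rw [Q.map_qRContract_tmul_comul_mul Sinv hS1 hS2,
      ← qR_eq_map_qRContract]
    simp [← TensorProduct.smul_tmul']

lemma qRConj_comul (hS1 : ∀ a : H, Sinv (Q.antipode a) = a)
    (hS2 : ∀ a : H, Q.antipode (Sinv a) = a) (h : H) :
    Q.qRConj Sinv (Q.comul h) = (h ⊗ₜ[k] (1 : H)) * qR Q Sinv := by
  have hΦ : Q.assoc * TensorProduct.assoc k H H H
        (TensorProduct.map Q.comul.toLinearMap LinearMap.id (Q.comul h))
      = TensorProduct.map LinearMap.id Q.comul.toLinearMap (Q.comul h) * Q.assoc := by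
    rw [Q.quasi_coassoc h, mul_assoc, Q.inv_mul_assoc, mul_one]
  rw [Q.qRConj_eq_map_qRContract Sinv hS1 hS2, hΦ,
    Q.map_qRContract_comul_mul_assoc Sinv hS1 hS2, Q.comul_counit h]

lemma twistInv_mul_antipodeFlip_qRConj (hS2 : ∀ a : H, Q.antipode (Sinv a) = a)
    (f g : H ⊗[k] H) (hgf : g * f = 1)
    (htwist : ∀ h : H, f * Q.comul (Q.antipode h) * g = Q.antipodeFlip (Q.comul h))
    (x : H ⊗[k] H) :
    g * Q.antipodeFlip (Q.qRConj Sinv x) = rhs12 Q (Uel Q Sinv g) x := by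
  induction x using TensorProduct.induction_on with
  | zero => simp
  | add x y hx hy => simp only [map_add, mul_add, hx, hy]
  | tmul a b =>
    have hb : Q.antipodeFlip ((1 : H) ⊗ₜ[k] Sinv b) = b ⊗ₜ[k] (1 : H) := by
      simp [hS2, Q.antipode_one]
    calc g * Q.antipodeFlip (Q.qRConj Sinv (a ⊗ₜ[k] b))
        = (g * f) * Q.comul (Q.antipode a) * (g * Q.antipodeFlip (qR Q Sinv)) * (b ⊗ₜ[k] 1) := by
          rw [qRConj_tmul, Q.antipodeFlip_mul, Q.antipodeFlip_mul, hb, ← htwist]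
          simp only [mul_assoc]
      _ = rhs12 Q (Uel Q Sinv g) (a ⊗ₜ[k] b) := by
          rw [hgf, one_mul]
          rfl

end QuasiHopfAlgebra

theorem stmt_12_general (Q : QuasiHopfAlgebra k H) (Sinv : H →ₗ[k] H)
    (hS1 : ∀ a : H, Sinv (Q.antipode a) = a)
    (hS2 : ∀ a : H, Q.antipode (Sinv a) = a)
    (f g : H ⊗[k] H) (hgf : g * f = 1)
    (htwist : ∀ h : H,
      f * Q.comul (Q.antipode h) * g
        = TensorProduct.map Q.antipode Q.antipode
            ((TensorProduct.comm k H H) (Q.comul h))) :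
    ∀ h : H,
      Uel Q Sinv g * ((1 : H) ⊗ₜ[k] Q.antipode h)
        = rhs12 Q (Uel Q Sinv g) (Q.comul h) := by
  intro h
  have hh : (1 : H) ⊗ₜ[k] Q.antipode h = Q.antipodeFlip (h ⊗ₜ[k] (1 : H)) := by
    simp [Q.antipode_one]
  calc Uel Q Sinv g * ((1 : H) ⊗ₜ[k] Q.antipode h)
      = g * Q.antipodeFlip ((h ⊗ₜ[k] (1 : H)) * qR Q Sinv) := by
        rw [hh, Q.antipodeFlip_mul, Uel, mul_assoc]
        rfl
    _ = rhs12 Q (Uel Q Sinv g) (Q.comul h) := by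
        rw [← Q.qRConj_comul Sinv hS1 hS2]
        exact Q.twistInv_mul_antipodeFlip_qRConj Sinv hS2 f g hgf htwist _

/-- for a quasi-Hopf algebra `H` with bijective antipode and
Drinfel'd twist `f` (with inverse `g`), the element `U = g¹S(q²) ⊗ g²S(q¹)`
satisfies `U·(1 ⊗ S(h)) = Δ(S(h₁))·U·(h₂ ⊗ 1)` for all `h ∈ H`. -/
theorem stmt_12 (Q : QuasiHopfAlgebra k H) (Sinv : H →ₗ[k] H)
    (hS1 : ∀ a : H, Sinv (Q.antipode a) = a)
    (hS2 : ∀ a : H, Q.antipode (Sinv a) = a)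
    (f g : H ⊗[k] H) (hfg : f * g = 1) (hgf : g * f = 1)
    (htwist : ∀ h : H,
      f * Q.comul (Q.antipode h) * g
        = TensorProduct.map Q.antipode Q.antipode
            ((TensorProduct.comm k H H) (Q.comul h))) :
    ∀ h : H,
      Uel Q Sinv g * ((1 : H) ⊗ₜ[k] Q.antipode h)
        = rhs12 Q (Uel Q Sinv g) (Q.comul h) :=
  stmt_12_general Q Sinv hS1 hS2 f g hgf htwist

end
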